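/- For any left A-module L, the induced T-module T ⊗_A L is isomorphic, under the identification of T-modules with pairs, to the pair (L ⊕ (X ⊗_A L), τ) where τ : X ⊗_A (L ⊕ (X ⊗_A L)) → L ⊕ (X ⊗_A L) is given (identifying X ⊗_A (L ⊕ (X ⊗_A L)) with (X ⊗_A L) ⊕ (X ⊗_A X ⊗_A L)) by τ(u, v) = (0, u). -/

import Mathlib

open MulOpposite

namespace Paper

noncomputable section

section Tens

variable (A : Type) [Ring A] (M N : Type) [AddCommGroup M] [AddCommGroup N]
  [Module Aᵐᵒᵖ M] [Module A N]

/-- The balancing relations for the tensor product `M ⊗_A N` of a right `A`-module `M`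
and a left `A`-module `N` over a (possibly noncommutative) ring `A`. -/
def TensRel : AddSubgroup (TensorProduct ℤ M N) :=
  AddSubgroup.closure {z | ∃ (a : A) (m : M) (n : N),
    z = (op a • m) ⊗ₜ[ℤ] n - m ⊗ₜ[ℤ] (a • n)}

/-- The tensor product `M ⊗_A N` over a (possibly noncommutative) ring `A`,
where `M` is a right `A`-module and `N` is a left `A`-module. -/
def Tens : Type := (TensorProduct ℤ M N) ⧸ TensRel A M N

instance : AddCommGroup (Tens A M N) :=
  QuotientAddGroup.Quotient.addCommGroup _

variable {A M N}

/-- The canonical map `M × N → M ⊗_A N`, `(m, n) ↦ m ⊗ n`. -/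
def Tens.mk (m : M) (n : N) : Tens A M N := QuotientAddGroup.mk (m ⊗ₜ[ℤ] n)

theorem Tens.mk_add_left (m m' : M) (n : N) :
    (Tens.mk (m + m') n : Tens A M N) = Tens.mk m n + Tens.mk m' n := by
  show QuotientAddGroup.mk _ = QuotientAddGroup.mk _
  rw [TensorProduct.add_tmul]

theorem Tens.mk_add_right (m : M) (n n' : N) :
    (Tens.mk m (n + n') : Tens A M N) = Tens.mk m n + Tens.mk m n' := by
  show QuotientAddGroup.mk _ = QuotientAddGroup.mk _
  rw [TensorProduct.tmul_add]

@[simp] theorem Tens.mk_zero_left (n : N) : (Tens.mk 0 n : Tens A M N) = 0 := by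
  show QuotientAddGroup.mk _ = QuotientAddGroup.mk _
  rw [TensorProduct.zero_tmul]

@[simp] theorem Tens.mk_zero_right (m : M) : (Tens.mk m 0 : Tens A M N) = 0 := by
  show QuotientAddGroup.mk _ = QuotientAddGroup.mk _
  rw [TensorProduct.tmul_zero]

theorem Tens.mk_balance (a : A) (m : M) (n : N) :
    (Tens.mk (op a • m) n : Tens A M N) = Tens.mk m (a • n) := by
  refine (QuotientAddGroup.eq (s := TensRel A M N) ..).2 ?_
  have h : ((op a • m) ⊗ₜ[ℤ] n - m ⊗ₜ[ℤ] (a • n)) ∈ TensRel A M N :=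
    AddSubgroup.subset_closure ⟨a, m, n, rfl⟩
  simpa [neg_add_eq_sub] using AddSubgroup.neg_mem _ h

@[simp] theorem Tens.mk_neg_left (m : M) (n : N) :
    (Tens.mk (-m) n : Tens A M N) = -Tens.mk m n := by
  show QuotientAddGroup.mk _ = -QuotientAddGroup.mk _
  rw [TensorProduct.neg_tmul]; rfl

@[simp] theorem Tens.mk_neg_right (m : M) (n : N) :
    (Tens.mk m (-n) : Tens A M N) = -Tens.mk m n := by
  show QuotientAddGroup.mk _ = -QuotientAddGroup.mk _
  rw [TensorProduct.tmul_neg]; rfl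

theorem Tens.ind {motive : Tens A M N → Prop} (zero : motive 0)
    (mk : ∀ m n, motive (Tens.mk m n))
    (add : ∀ x y, motive x → motive y → motive (x + y)) : ∀ z, motive z := by
  intro z
  obtain ⟨t, rfl⟩ := QuotientAddGroup.mk_surjective z
  induction t using TensorProduct.induction_on with
  | zero => exact zero
  | tmul m n => exact mk m n
  | add x y hx hy => exact add _ _ hx hy

section lift

variable {P : Type} [AddCommGroup P]

private def toIntBilin (f : M →+ N →+ P) : M →ₗ[ℤ] N →ₗ[ℤ] P where
  toFun m := (f m).toIntLinearMap
  map_add' m m' := by ext n; simp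
  map_smul' c m := by ext n; simp

/-- Lifting a balanced biadditive map to the tensor product. -/
def Tens.lift (f : M →+ N →+ P)
    (hf : ∀ (a : A) (m : M) (n : N), f (op a • m) n = f m (a • n)) :
    Tens A M N →+ P := by
  refine QuotientAddGroup.lift (TensRel A M N)
    (TensorProduct.lift (toIntBilin f)).toAddMonoidHom ?_
  intro t ht
  refine AddSubgroup.closure_induction ?_ ?_ ?_ ?_ ht
  · rintro z ⟨a, m, n, rfl⟩
    simp [toIntBilin, hf a m n]
  · simp
  · intro x y _ _ hx hy
    have hx' : TensorProduct.lift (toIntBilin f) x = 0 := hx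
    have hy' : TensorProduct.lift (toIntBilin f) y = 0 := hy
    simp [hx', hy']
  · intro x _ hx
    have hx' : TensorProduct.lift (toIntBilin f) x = 0 := hx
    simp [hx']

@[simp] theorem Tens.lift_mk (f : M →+ N →+ P)
    (hf : ∀ (a : A) (m : M) (n : N), f (op a • m) n = f m (a • n)) (m : M) (n : N) :
    Tens.lift f hf (Tens.mk m n) = f m n := by
  show TensorProduct.lift (toIntBilin f) (m ⊗ₜ[ℤ] n) = f m n
  simp [toIntBilin]

end lift

end Tens

section AddHomExt

variable {A : Type} [Ring A] {M N : Type} [AddCommGroup M] [AddCommGroup N]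
  [Module Aᵐᵒᵖ M] [Module A N] {P : Type} [AddCommGroup P]

theorem Tens.addHom_ext {f g : Tens A M N →+ P}
    (h : ∀ m n, f (Tens.mk m n) = g (Tens.mk m n)) : f = g := by
  ext z
  refine Tens.ind (motive := fun z => f z = g z) ?_ h ?_ z
  · simp
  · intro x y hx hy; simp [hx, hy]

end AddHomExt

section LeftModule

variable {A : Type} [Ring A] {M N : Type} [AddCommGroup M] [AddCommGroup N]
  [Module Aᵐᵒᵖ M] [Module A N]
  {B : Type} [Ring B] [Module B M] [SMulCommClass Aᵐᵒᵖ B M]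

/-- Left scalar multiplication on the tensor product via the left factor. -/
def Tens.lsmul (b : B) : Tens A M N →+ Tens A M N :=
  Tens.lift
    { toFun := fun m =>
        { toFun := fun n => Tens.mk (b • m) n
          map_zero' := by simp
          map_add' := fun n n' => Tens.mk_add_right _ _ _ }
      map_zero' := by ext n; simp
      map_add' := fun m m' => by ext n; simp [smul_add, Tens.mk_add_left] }
    (by intro a m n
        simp only [AddMonoidHom.coe_mk, ZeroHom.coe_mk]
        rw [← smul_comm (op a) b m, Tens.mk_balance])

theorem Tens.lsmul_mk (b : B) (m : M) (n : N) :
    Tens.lsmul b (Tens.mk m n : Tens A M N) = Tens.mk (b • m) n := by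
  simp [Tens.lsmul]

instance : SMul B (Tens A M N) := ⟨fun b z => Tens.lsmul b z⟩

@[simp] theorem Tens.smul_mk (b : B) (m : M) (n : N) :
    b • (Tens.mk m n : Tens A M N) = Tens.mk (b • m) n :=
  Tens.lsmul_mk b m n

instance : MulAction B (Tens A M N) where
  one_smul z := DFunLike.congr_fun
    (Tens.addHom_ext (f := Tens.lsmul (1 : B)) (g := AddMonoidHom.id _)
      (fun m n => by rw [Tens.lsmul_mk, one_smul]; rfl)) z
  mul_smul b c z := DFunLike.congr_fun
    (Tens.addHom_ext (f := Tens.lsmul (b * c)) (g := (Tens.lsmul b).comp (Tens.lsmul c))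
      (fun m n => by
        simp only [AddMonoidHom.coe_comp, Function.comp_apply, Tens.lsmul_mk, mul_smul])) z
  
instance : DistribMulAction B (Tens A M N) where
  smul_zero b := (Tens.lsmul b).map_zero
  smul_add b x y := (Tens.lsmul b).map_add x y

instance Tens.instLeftModule : Module B (Tens A M N) where
  add_smul b c z := DFunLike.congr_fun
    (Tens.addHom_ext (f := Tens.lsmul (b + c)) (g := Tens.lsmul b + Tens.lsmul c)
      (fun m n => by
        simp only [AddMonoidHom.add_apply, Tens.lsmul_mk, add_smul, Tens.mk_add_left])) z
  zero_smul z := DFunLike.congr_fun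
    (Tens.addHom_ext (f := Tens.lsmul (0 : B)) (g := 0)
      (fun m n => by simp [Tens.lsmul_mk])) z

end LeftModule

section RightModule

variable {A : Type} [Ring A] {M N : Type} [AddCommGroup M] [AddCommGroup N]
  [Module Aᵐᵒᵖ M] [Module A N]
  {C : Type} [Ring C] [Module Cᵐᵒᵖ N] [SMulCommClass A Cᵐᵒᵖ N]

/-- Right scalar multiplication on the tensor product via the right factor. -/
def Tens.rsmul (c : Cᵐᵒᵖ) : Tens A M N →+ Tens A M N :=
  Tens.lift
    { toFun := fun m =>
        { toFun := fun n => Tens.mk m (c • n)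
          map_zero' := by simp
          map_add' := fun n n' => by
            show (Tens.mk m (c • (n + n')) : Tens A M N) = _
            rw [smul_add, Tens.mk_add_right] }
      map_zero' := by ext n; simp
      map_add' := fun m m' => by ext n; exact Tens.mk_add_left _ _ _ }
    (by intro a m n
        show (Tens.mk (op a • m) (c • n) : Tens A M N) = Tens.mk m (c • a • n)
        rw [Tens.mk_balance, smul_comm])

theorem Tens.rsmul_mk (c : Cᵐᵒᵖ) (m : M) (n : N) :
    Tens.rsmul c (Tens.mk m n : Tens A M N) = Tens.mk m (c • n) := by
  simp [Tens.rsmul]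

instance : SMul Cᵐᵒᵖ (Tens A M N) := ⟨fun c z => Tens.rsmul c z⟩

@[simp] theorem Tens.op_smul_mk (c : Cᵐᵒᵖ) (m : M) (n : N) :
    c • (Tens.mk m n : Tens A M N) = Tens.mk m (c • n) :=
  Tens.rsmul_mk c m n

instance : MulAction Cᵐᵒᵖ (Tens A M N) where
  one_smul z := DFunLike.congr_fun
    (Tens.addHom_ext (f := Tens.rsmul (1 : Cᵐᵒᵖ)) (g := AddMonoidHom.id _)
      (fun m n => by rw [Tens.rsmul_mk, one_smul]; rfl)) z
  mul_smul b c z := DFunLike.congr_fun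
    (Tens.addHom_ext (f := Tens.rsmul (b * c)) (g := (Tens.rsmul b).comp (Tens.rsmul c))
      (fun m n => by
        simp only [AddMonoidHom.coe_comp, Function.comp_apply, Tens.rsmul_mk, mul_smul])) z

instance : DistribMulAction Cᵐᵒᵖ (Tens A M N) where
  smul_zero c := (Tens.rsmul c).map_zero
  smul_add c x y := (Tens.rsmul c).map_add x y

instance Tens.instRightModule : Module Cᵐᵒᵖ (Tens A M N) where
  add_smul b c z := DFunLike.congr_fun
    (Tens.addHom_ext (f := Tens.rsmul (b + c)) (g := Tens.rsmul b + Tens.rsmul c)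
      (fun m n => by
        simp only [AddMonoidHom.add_apply, Tens.rsmul_mk, add_smul, Tens.mk_add_right])) z
  zero_smul z := DFunLike.congr_fun
    (Tens.addHom_ext (f := Tens.rsmul (0 : Cᵐᵒᵖ)) (g := 0)
      (fun m n => by simp [Tens.rsmul_mk])) z

end RightModule

section BimoduleTens

variable {A : Type} [Ring A] {M N : Type} [AddCommGroup M] [AddCommGroup N]
  [Module Aᵐᵒᵖ M] [Module A N]
  {B : Type} [Ring B] [Module B M] [SMulCommClass Aᵐᵒᵖ B M]
  {C : Type} [Ring C] [Module Cᵐᵒᵖ N] [SMulCommClass A Cᵐᵒᵖ N]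

instance Tens.instSMulCommClass : SMulCommClass B Cᵐᵒᵖ (Tens A M N) where
  smul_comm b c z := by
    refine Tens.ind (motive := fun z => b • c • z = c • b • z) ?_ ?_ ?_ z
    · simp only [smul_zero]
    · intro m n
      rw [Tens.op_smul_mk, Tens.smul_mk, Tens.smul_mk, Tens.op_smul_mk]
    · intro x y hx hy; simp only [smul_add, hx, hy]

instance Tens.instSMulCommClass' : SMulCommClass Cᵐᵒᵖ B (Tens A M N) :=
  SMulCommClass.symm _ _ _

end BimoduleTens

section Lifts

variable {A : Type} [Ring A] {M N : Type} [AddCommGroup M] [AddCommGroup N]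
  [Module Aᵐᵒᵖ M] [Module A N]
  {B : Type} [Ring B] [Module B M] [SMulCommClass Aᵐᵒᵖ B M]

/-- Linear version of `Tens.lift`, for a balanced biadditive map which is moreover
`B`-linear in the first variable. -/
def Tens.liftL {P : Type} [AddCommGroup P] [Module B P] (f : M →+ N →+ P)
    (hf : ∀ (a : A) (m : M) (n : N), f (op a • m) n = f m (a • n))
    (hl : ∀ (b : B) (m : M) (n : N), f (b • m) n = b • f m n) :
    Tens A M N →ₗ[B] P where
  toFun := Tens.lift f hf
  map_add' := (Tens.lift f hf).map_add
  map_smul' b z := by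
    simp only [RingHom.id_apply]
    refine Tens.ind (motive := fun z => Tens.lift f hf (b • z) = b • Tens.lift f hf z) ?_ ?_ ?_ z
    · simp
    · intro m n
      rw [Tens.smul_mk, Tens.lift_mk, Tens.lift_mk, hl]
    · intro x y hx hy
      rw [smul_add, map_add, map_add, smul_add, hx, hy]

@[simp] theorem Tens.liftL_mk {P : Type} [AddCommGroup P] [Module B P] (f : M →+ N →+ P)
    (hf : ∀ (a : A) (m : M) (n : N), f (op a • m) n = f m (a • n))
    (hl : ∀ (b : B) (m : M) (n : N), f (b • m) n = b • f m n) (m : M) (n : N) :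
    Tens.liftL f hf hl (Tens.mk m n : Tens A M N) = f m n :=
  Tens.lift_mk f hf m n

/-- The functorial map `Id_M ⊗ g` on tensor products. -/
def Tens.mapRight {N' : Type} [AddCommGroup N'] [Module A N'] (g : N →ₗ[A] N') :
    Tens A M N →ₗ[B] Tens A M N' :=
  Tens.liftL
    { toFun := fun m =>
        { toFun := fun n => Tens.mk m (g n)
          map_zero' := by simp
          map_add' := fun n n' => by
            show (Tens.mk m (g (n + n')) : Tens A M N') = _
            rw [map_add, Tens.mk_add_right] }
      map_zero' := by ext n; simp
      map_add' := fun m m' => by ext n; exact Tens.mk_add_left _ _ _ }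
    (by intro a m n
        show (Tens.mk (op a • m) (g n) : Tens A M N') = Tens.mk m (g (a • n))
        rw [Tens.mk_balance, map_smul])
    (by intro b m n
        show (Tens.mk (b • m) (g n) : Tens A M N') = b • Tens.mk m (g n)
        rw [Tens.smul_mk])

@[simp] theorem Tens.mapRight_mk {N' : Type} [AddCommGroup N'] [Module A N'] (g : N →ₗ[A] N')
    (m : M) (n : N) :
    (Tens.mapRight (B := B) g) (Tens.mk m n : Tens A M N) = Tens.mk m (g n) := by
  simp [Tens.mapRight]

theorem Tens.mapRight_comp {N' N'' : Type} [AddCommGroup N'] [Module A N']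
    [AddCommGroup N''] [Module A N''] (g : N →ₗ[A] N') (h : N' →ₗ[A] N'') :
    (Tens.mapRight (B := B) (h.comp g) : Tens A M N →ₗ[B] Tens A M N'') =
      (Tens.mapRight h).comp (Tens.mapRight g) := by
  apply LinearMap.ext
  refine Tens.ind (motive := fun z => (Tens.mapRight (B := B) (h.comp g)) z =
    ((Tens.mapRight (B := B) h).comp (Tens.mapRight g)) z) ?_ ?_ ?_
  · simp
  · intro m n; simp
  · intro x y hx hy; simp only [map_add, hx, hy]

theorem Tens.mapRight_id :
    (Tens.mapRight (B := B) (LinearMap.id : N →ₗ[A] N) : Tens A M N →ₗ[B] Tens A M N) =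
      LinearMap.id := by
  apply LinearMap.ext
  refine Tens.ind (motive := fun z => (Tens.mapRight (B := B) (LinearMap.id : N →ₗ[A] N)) z =
    LinearMap.id z) ?_ ?_ ?_
  · simp
  · intro m n; simp
  · intro x y hx hy; simp only [map_add, hx, hy]

end Lifts


section Pair

open CategoryTheory

variable (A X : Type) [Ring A] [AddCommGroup X] [Module A X] [Module Aᵐᵒᵖ X]
  [SMulCommClass A Aᵐᵒᵖ X] [SMulCommClass Aᵐᵒᵖ A X]

/-- The category of pairs `(M, σ)` with `M` a left `A`-module and
`σ : X ⊗_A M → M` an `A`-linear map with `σ ∘ (Id_X ⊗ σ) = 0`;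
this models modules over the trivial extension `A ⊕ X`. -/
structure PairMod where
  carrier : Type
  [acg : AddCommGroup carrier]
  [amod : Module A carrier]
  σ : Tens A X carrier →ₗ[A] carrier
  nil : ∀ (x : X) (z : Tens A X carrier), σ (Tens.mk x (σ z)) = 0

attribute [instance] PairMod.acg PairMod.amod

variable {A X}

/-- Morphisms of pairs: `A`-linear maps commuting with the structure maps. -/
@[ext] structure PairHom (P Q : PairMod A X) where
  f : P.carrier →ₗ[A] Q.carrier
  comm : ∀ (x : X) (m : P.carrier), f (P.σ (Tens.mk x m)) = Q.σ (Tens.mk x (f m))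

instance : Category (PairMod A X) where
  Hom := PairHom
  id P := ⟨LinearMap.id, fun x m => rfl⟩
  comp {P Q R} f g := ⟨g.f.comp f.f, fun x m => by
    simp only [LinearMap.comp_apply, f.comm, g.comm]⟩
  id_comp f := by apply PairHom.ext; rfl
  comp_id f := by apply PairHom.ext; rfl
  assoc f g h := by apply PairHom.ext; rfl

@[simp] theorem PairMod.id_f (P : PairMod A X) : (𝟙 P : PairHom P P).f = LinearMap.id := rfl

@[simp] theorem PairMod.comp_f {P Q R : PairMod A X} (f : P ⟶ Q) (g : Q ⟶ R) :
    (f ≫ g).f = g.f.comp f.f := rfl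

theorem PairHom.comm' {P Q : PairMod A X} (f : P ⟶ Q) (z : Tens A X P.carrier) :
    f.f (P.σ z) = Q.σ (Tens.mapRight (B := A) f.f z) := by
  refine Tens.ind (motive := fun z => f.f (P.σ z) = Q.σ (Tens.mapRight (B := A) f.f z))
    ?_ ?_ ?_ z
  · simp
  · intro x m; rw [f.comm, Tens.mapRight_mk]
  · intro x y hx hy; simp only [map_add, hx, hy]

variable (A X)

/-- The sign-change functor `S : (M, σ) ↦ (M, -σ)`. -/
def PMS : PairMod A X ⥤ PairMod A X where
  obj P :=
    { carrier := P.carrier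
      σ := -P.σ
      nil := fun x z => by
        simp only [LinearMap.neg_apply, Tens.mk_neg_right, map_neg, neg_neg, P.nil] }
  map {P Q} f :=
    { f := f.f
      comm := fun x m => by
        simp only [LinearMap.neg_apply, map_neg, f.comm, Tens.mk_neg_right] }
  map_id P := rfl
  map_comp f g := rfl

/-- The functor `X ⊗_A - : (M, σ) ↦ (X ⊗_A M, Id_X ⊗ σ)`. -/
def XF : PairMod A X ⥤ PairMod A X where
  obj P :=
    { carrier := Tens A X P.carrier
      σ := Tens.mapRight (B := A) P.σ
      nil := fun x z => by
        rw [Tens.mapRight_mk]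
        have : P.σ (Tens.mapRight (B := A) P.σ z) = 0 := by
          refine Tens.ind (motive := fun z => P.σ (Tens.mapRight (B := A) P.σ z) = 0) ?_ ?_ ?_ z
          · simp
          · intro x' u; rw [Tens.mapRight_mk, P.nil]
          · intro u v hu hv; simp only [map_add, hu, hv, add_zero]
        rw [this, Tens.mk_zero_right] }
  map {P Q} f :=
    { f := Tens.mapRight (B := A) f.f
      comm := fun x m => by
        rw [Tens.mapRight_mk, Tens.mapRight_mk, Tens.mapRight_mk, PairHom.comm'] }
  map_id P := by
    apply PairHom.ext
    exact Tens.mapRight_id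
  map_comp f g := by
    apply PairHom.ext
    exact Tens.mapRight_comp _ _

/-- The forgetful (restriction) functor to `A`-modules. -/
def resF : PairMod A X ⥤ ModuleCat.{0} A where
  obj P := ModuleCat.of A P.carrier
  map f := ModuleCat.ofHom f.f

/-- The structure map of the pair corresponding to `T ⊗_A L`. -/
def tau (L : Type) [AddCommGroup L] [Module A L] :
    Tens A X (L × Tens A X L) →ₗ[A] (L × Tens A X L) :=
  Tens.liftL
    { toFun := fun x =>
        { toFun := fun p => (0, Tens.mk x p.1)
          map_zero' := by simp
          map_add' := fun p q => by simp [Tens.mk_add_right, Prod.ext_iff] }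
      map_zero' := by ext p <;> simp
      map_add' := fun x x' => by ext p <;> simp [Tens.mk_add_left] }
    (by intro a x p
        show ((0 : L), Tens.mk (op a • x) p.1) = ((0 : L), Tens.mk x (a • p.1))
        rw [Tens.mk_balance])
    (by intro a x p
        show ((0 : L), Tens.mk (a • x) p.1) = a • ((0 : L), Tens.mk x p.1)
        rw [Prod.smul_mk, smul_zero, Tens.smul_mk])

@[simp] theorem tau_mk (L : Type) [AddCommGroup L] [Module A L] (x : X) (p : L × Tens A X L) :
    tau A X L (Tens.mk x p) = (0, Tens.mk x p.1) := by
  simp [tau]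

theorem tau_fst (L : Type) [AddCommGroup L] [Module A L] (z : Tens A X (L × Tens A X L)) :
    (tau A X L z).1 = 0 := by
  refine Tens.ind (motive := fun z => (tau A X L z).1 = 0) ?_ ?_ ?_ z
  · simp
  · intro x p; simp
  · intro u v hu hv; simp only [map_add, Prod.fst_add, hu, hv, add_zero]

/-- The pair corresponding to the induced module `T ⊗_A L`. -/
def TFobj (L : Type) [AddCommGroup L] [Module A L] : PairMod A X where
  carrier := L × Tens A X L
  σ := tau A X L
  nil := fun x z => by
    rw [show tau A X L z = (0, (tau A X L z).2) from Prod.ext (tau_fst A X L z) rfl]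
    rw [tau_mk]
    simp

/-- The functor `T ⊗_A - : A-Mod → T-Mod` at the level of pairs. -/
def TF : ModuleCat.{0} A ⥤ PairMod A X where
  obj L := TFobj A X L
  map {L L'} g :=
    { f := LinearMap.prodMap (g.hom : L →ₗ[A] L') (Tens.mapRight (B := A) (g.hom : L →ₗ[A] L'))
      comm := fun x (m : L × Tens A X L) => by
        show LinearMap.prodMap (g.hom : L →ₗ[A] L') (Tens.mapRight (B := A) (g.hom : L →ₗ[A] L'))
            (tau A X L (Tens.mk x m)) = tau A X L' (Tens.mk x (LinearMap.prodMap
              (g.hom : L →ₗ[A] L') (Tens.mapRight (B := A) (g.hom : L →ₗ[A] L')) m))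
        rw [tau_mk, tau_mk]
        show (_, Tens.mapRight (B := A) (g.hom : L →ₗ[A] L') (Tens.mk x m.1)) = _
        rw [Tens.mapRight_mk]
        simp only [map_zero, Prod.mk.injEq, true_and]
        exact ⟨by simp, rfl⟩ }
  map_id L := by
    apply PairHom.ext
    apply LinearMap.ext
    rintro ⟨l, u⟩
    exact Prod.ext rfl (DFunLike.congr_fun
      (Tens.mapRight_id (A := A) (M := X) (N := L) (B := A)) u)
  map_comp {L L' L''} f g := by
    apply PairHom.ext
    apply LinearMap.ext
    rintro ⟨l, u⟩
    exact Prod.ext rfl (DFunLike.congr_fun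
      (Tens.mapRight_comp (B := A) (f.hom : L →ₗ[A] L') (g.hom : L' →ₗ[A] L'')) u)

end Pair

section Extra

open CategoryTheory

variable (A X : Type) [Ring A] [AddCommGroup X] [Module A X] [Module Aᵐᵒᵖ X]
  [SMulCommClass A Aᵐᵒᵖ X] [SMulCommClass Aᵐᵒᵖ A X]

/-- The structure map of the pair corresponding to the regular module `T = A ⊕ X`. -/
def sigmaT : Tens A X (A × X) →ₗ[A] A × X :=
  Tens.liftL
    { toFun := fun x =>
        { toFun := fun p => ((0 : A), op p.1 • x)
          map_zero' := by simp
          map_add' := fun p q => by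
            show ((0 : A), op (p.1 + q.1) • x) = ((0 : A) + 0, op p.1 • x + op q.1 • x)
            rw [Prod.mk.injEq]
            constructor
            · rw [add_zero]
            · rw [← add_smul]; rfl }
      map_zero' := by ext p <;> simp
      map_add' := fun x x' => by ext p <;> simp [smul_add] }
    (by intro a x p
        show ((0 : A), op p.1 • op a • x) = ((0 : A), op (a • p).1 • x)
        rw [Prod.mk.injEq]
        refine ⟨rfl, ?_⟩
        rw [← mul_smul]
        rfl)
    (by intro a x p
        show ((0 : A), op p.1 • a • x) = a • ((0 : A), op p.1 • x)
        rw [Prod.smul_mk, smul_zero, smul_comm])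

@[simp] theorem sigmaT_mk (x : X) (p : A × X) :
    sigmaT A X (Tens.mk x p) = ((0 : A), op p.1 • x) := by
  simp [sigmaT]

theorem sigmaT_fst (z : Tens A X (A × X)) : (sigmaT A X z).1 = 0 := by
  refine Tens.ind (motive := fun z => (sigmaT A X z).1 = 0) ?_ ?_ ?_ z
  · simp
  · intro x p; simp
  · intro u v hu hv; simp only [map_add, Prod.fst_add, hu, hv, add_zero]

/-- The pair corresponding to the regular module `T = A ⊕ X` over the trivial extension. -/
def regT : PairMod A X where
  carrier := A × X
  σ := sigmaT A X
  nil := fun x z => by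
    rw [show sigmaT A X z = (0, (sigmaT A X z).2) from Prod.ext (sigmaT_fst A X z) rfl,
      sigmaT_mk]
    simp

variable {A X}

-- The module structure over the trivial extension `T = A ⊕ X` associated to a
-- pair `(M, σ)`: the action is `(a, x) • m = a • m + σ(x ⊗ m)`.

set_option maxHeartbeats 1000000 in
def PairMod.toModule (P : PairMod A X) : Module (TrivSqZeroExt A X) P.carrier where
  smul t m := t.fst • m + P.σ (Tens.mk t.snd m)
  one_smul m := by
    show (1 : TrivSqZeroExt A X).fst • m + P.σ (Tens.mk (1 : TrivSqZeroExt A X).snd m) = m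
    rw [TrivSqZeroExt.fst_one, TrivSqZeroExt.snd_one, one_smul, Tens.mk_zero_left, map_zero,
      add_zero]
  mul_smul s t m := by
    show (s * t).fst • m + P.σ (Tens.mk (s * t).snd m)
        = s.fst • (t.fst • m + P.σ (Tens.mk t.snd m))
          + P.σ (Tens.mk s.snd (t.fst • m + P.σ (Tens.mk t.snd m)))
    rw [TrivSqZeroExt.fst_mul, TrivSqZeroExt.snd_mul]
    show (s.fst * t.fst) • m + P.σ (Tens.mk (s.fst • t.snd + MulOpposite.op t.fst • s.snd) m) = _
    rw [Tens.mk_add_left, map_add]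
    have hb : (Tens.mk (MulOpposite.op t.fst • s.snd) m : Tens A X P.carrier) = Tens.mk s.snd (t.fst • m) :=
      Tens.mk_balance _ _ _
    have h1 : (Tens.mk (s.fst • t.snd) m : Tens A X P.carrier) = s.fst • Tens.mk t.snd m :=
      (Tens.smul_mk _ _ _).symm
    rw [hb, h1, map_smul, Tens.mk_add_right, map_add, P.nil, add_zero, mul_smul, smul_add]
    abel
  smul_zero t := by
    show t.fst • (0 : P.carrier) + P.σ (Tens.mk t.snd 0) = 0
    rw [smul_zero, Tens.mk_zero_right, map_zero, add_zero]
  smul_add t m m' := by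
    show t.fst • (m + m') + P.σ (Tens.mk t.snd (m + m'))
      = (t.fst • m + P.σ (Tens.mk t.snd m)) + (t.fst • m' + P.σ (Tens.mk t.snd m'))
    rw [smul_add, Tens.mk_add_right, map_add]
    abel
  add_smul s t m := by
    show (s + t).fst • m + P.σ (Tens.mk (s + t).snd m)
      = (s.fst • m + P.σ (Tens.mk s.snd m)) + (t.fst • m + P.σ (Tens.mk t.snd m))
    rw [TrivSqZeroExt.fst_add, TrivSqZeroExt.snd_add, add_smul, Tens.mk_add_left, map_add]
    abel
  zero_smul m := by
    show (0 : TrivSqZeroExt A X).fst • m + P.σ (Tens.mk (0 : TrivSqZeroExt A X).snd m) = 0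
    rw [TrivSqZeroExt.fst_zero, TrivSqZeroExt.snd_zero, zero_smul, Tens.mk_zero_left, map_zero,
      add_zero]

/-- The bundled `T`-module associated to a pair. -/
def PairMod.toModuleCat (P : PairMod A X) : ModuleCat.{0} (TrivSqZeroExt A X) :=
  letI := P.toModule
  ModuleCat.of (TrivSqZeroExt A X) P.carrier

end Extra

section ProjDim

/-- `ProjDimLE R n M` means `M` admits a projective resolution of length at most `n`. -/
def ProjDimLE (R : Type) [Ring R] : ℕ → ModuleCat.{0} R → Prop
  | 0, M => CategoryTheory.Projective M
  | (n+1), M => CategoryTheory.Projective M ∨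
      ∃ (P K : ModuleCat.{0} R) (i : K ⟶ P) (p : P ⟶ M),
        CategoryTheory.Projective P ∧ Function.Injective i ∧ Function.Surjective p ∧
        Function.Exact i p ∧ ProjDimLE R n K

/-- `M` has finite projective dimension over `R`. -/
def FinProjDim (R : Type) [Ring R] (M : ModuleCat.{0} R) : Prop :=
  ∃ n, ProjDimLE R n M

end ProjDim

section TrivExtInst

instance (R : Type) [Ring R] : SMulCommClass Rᵐᵒᵖ R R :=
  ⟨fun a b c => by
    rw [MulOpposite.smul_eq_mul_unop, MulOpposite.smul_eq_mul_unop, smul_eq_mul, smul_eq_mul,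
      mul_assoc]⟩

variable (R Z : Type) [Ring R] [AddCommGroup Z] [Module R Z] [Module Rᵐᵒᵖ Z]
  [SMulCommClass R Rᵐᵒᵖ Z] [SMulCommClass Rᵐᵒᵖ R Z]

instance : SMulCommClass Rᵐᵒᵖ (TrivSqZeroExt R Z) (TrivSqZeroExt R Z) where
  smul_comm a s t := by
    refine TrivSqZeroExt.ext ?_ ?_
    · show (s.fst * t.fst) * a.unop = s.fst * (t.fst * a.unop)
      rw [mul_assoc]
    · show a • (s.fst • t.snd + op t.fst • s.snd)
        = s.fst • (a • t.snd) + op (t.fst * a.unop) • s.snd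
      rw [smul_add, smul_comm a s.fst t.snd]
      congr 1
      rw [MulOpposite.op_mul, MulOpposite.op_unop, mul_smul]

end TrivExtInst

end

end Paper



noncomputable section Aux3

open Paper MulOpposite

variable (A X L : Type) [Ring A] [AddCommGroup X] [Module A X] [Module Aᵐᵒᵖ X]
    [SMulCommClass A Aᵐᵒᵖ X] [SMulCommClass Aᵐᵒᵖ A X] [AddCommGroup L] [Module A L]

/-- The forward map `T ⊗_A L → L × (X ⊗_A L)`. -/
def fwd3 : Tens A (TrivSqZeroExt A X) L →ₗ[A] L × Tens A X L :=
  Tens.liftL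
    { toFun := fun t =>
        { toFun := fun l => (t.fst • l, Tens.mk t.snd l)
          map_zero' := by simp
          map_add' := fun l l' => by simp [smul_add, Tens.mk_add_right, Prod.ext_iff] }
      map_zero' := by ext l <;> simp
      map_add' := fun t t' => by ext l <;> simp [add_smul, Tens.mk_add_left] }
    (by intro a t l
        show ((op a • t).fst • l, (Tens.mk (op a • t).snd l : Tens A X L))
          = (t.fst • a • l, Tens.mk t.snd (a • l))
        rw [Prod.mk.injEq]
        constructor
        · show (t.fst * a) • l = t.fst • a • l
          exact mul_smul t.fst a l
        · show (Tens.mk (op a • t.snd) l : Tens A X L) = _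
          rw [Tens.mk_balance])
    (by intro b t l
        show ((b • t).fst • l, (Tens.mk (b • t).snd l : Tens A X L))
          = b • (t.fst • l, Tens.mk t.snd l)
        rw [Prod.smul_mk, Prod.mk.injEq]
        constructor
        · show (b • t.fst) • l = b • t.fst • l
          rw [smul_eq_mul, mul_smul]
        · show (Tens.mk (b • t.snd) l : Tens A X L) = _
          rw [Tens.smul_mk])

@[simp] theorem fwd3_mk (t : TrivSqZeroExt A X) (l : L) :
    fwd3 A X L (Tens.mk t l) = (t.fst • l, Tens.mk t.snd l) :=
  Tens.liftL_mk _ _ _ t l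

/-- `l ↦ 1 ⊗ l`. -/
def bwd1 : L →ₗ[A] Tens A (TrivSqZeroExt A X) L where
  toFun l := Tens.mk 1 l
  map_add' l l' := Tens.mk_add_right _ _ _
  map_smul' a l := by
    simp only [RingHom.id_apply]
    rw [Tens.smul_mk a (1 : TrivSqZeroExt A X) l,
      ← Tens.mk_balance a (1 : TrivSqZeroExt A X) l]
    congr 1
    refine TrivSqZeroExt.ext ?_ ?_
    · show op a • (1 : A) = a • (1 : A)
      rw [smul_eq_mul, mul_one, MulOpposite.smul_eq_mul_unop, unop_op, one_mul]
    · show op a • (0 : X) = a • (0 : X)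
      rw [smul_zero, smul_zero]

/-- `x ⊗ l ↦ (0, x) ⊗ l`. -/
def bwd2 : Tens A X L →ₗ[A] Tens A (TrivSqZeroExt A X) L :=
  Tens.liftL
    { toFun := fun x =>
        { toFun := fun l => Tens.mk (TrivSqZeroExt.inr x) l
          map_zero' := by simp
          map_add' := fun l l' => Tens.mk_add_right _ _ _ }
      map_zero' := by ext l; simp
      map_add' := fun x x' => by
        ext l
        show (Tens.mk (TrivSqZeroExt.inr (x + x')) l : Tens A (TrivSqZeroExt A X) L) = _
        rw [TrivSqZeroExt.inr_add, Tens.mk_add_left]; rfl }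
    (by intro a x l
        show (Tens.mk (TrivSqZeroExt.inr (op a • x)) l : Tens A (TrivSqZeroExt A X) L)
          = Tens.mk (TrivSqZeroExt.inr x) (a • l)
        rw [← Tens.mk_balance]
        congr 1
        refine TrivSqZeroExt.ext ?_ ?_
        · show (0 : A) = op a • (0 : A)
          rw [smul_zero]
        · rfl)
    (by intro b x l
        show (Tens.mk (TrivSqZeroExt.inr (b • x)) l : Tens A (TrivSqZeroExt A X) L)
          = b • Tens.mk (TrivSqZeroExt.inr x) l
        rw [Tens.smul_mk]
        congr 1
        refine TrivSqZeroExt.ext ?_ ?_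
        · show (0 : A) = b • (0 : A)
          rw [smul_zero]
        · rfl)

@[simp] theorem bwd2_mk (x : X) (l : L) :
    bwd2 A X L (Tens.mk x l) = Tens.mk (TrivSqZeroExt.inr x) l :=
  Tens.liftL_mk _ _ _ x l

theorem fwd3_bwd2 (u : Tens A X L) : fwd3 A X L (bwd2 A X L u) = (0, u) := by
  refine Tens.ind (motive := fun u => fwd3 A X L (bwd2 A X L u) = (0, u)) ?_ ?_ ?_ u
  · simp; rfl
  · intro x l
    rw [bwd2_mk, fwd3_mk]
    refine Prod.ext ?_ rfl
    show (0 : A) • l = 0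
    rw [zero_smul]
  · intro x y hx hy
    rw [map_add, map_add, hx, hy, Prod.mk_add_mk, add_zero]

/-- The equivalence `T ⊗_A L ≃ L × (X ⊗_A L)`. -/
def equiv3 : Tens A (TrivSqZeroExt A X) L ≃ₗ[A] (L × Tens A X L) :=
  LinearEquiv.ofLinear (fwd3 A X L)
    (LinearMap.coprod (bwd1 A X L) (bwd2 A X L))
    (by
      apply LinearMap.ext
      rintro ⟨l, u⟩
      simp only [LinearMap.comp_apply, LinearMap.coprod_apply, LinearMap.id_apply, map_add,
        fwd3_bwd2]
      show fwd3 A X L (Tens.mk 1 l) + _ = _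
      rw [fwd3_mk]
      refine Prod.ext ?_ ?_
      · show (1 : A) • l + (0 : L) = l
        rw [one_smul, add_zero]
      · show Tens.mk (0 : X) l + u = u
        rw [Tens.mk_zero_left, zero_add])
    (by
      apply LinearMap.ext
      refine Tens.ind (motive := fun z =>
        (LinearMap.coprod (bwd1 A X L) (bwd2 A X L)).comp (fwd3 A X L) z
          = LinearMap.id z) ?_ ?_ ?_
      · simp
      · intro t l
        simp only [LinearMap.comp_apply, LinearMap.id_apply, fwd3_mk, LinearMap.coprod_apply,
          bwd2_mk]
        show Tens.mk (1 : TrivSqZeroExt A X) (t.fst • l) + _ = _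
        rw [← Tens.mk_balance, ← Tens.mk_add_left]
        congr 1
        refine TrivSqZeroExt.ext ?_ ?_
        · show op t.fst • (1 : A) + (0 : A) = t.fst
          rw [MulOpposite.smul_eq_mul_unop, unop_op, one_mul, add_zero]
        · show op t.fst • (0 : X) + t.snd = t.snd
          rw [smul_zero, zero_add]
      · intro x y hx hy
        simp only [map_add, hx, hy])

end Aux3

open CategoryTheory Paper MulOpposite in
/-- For a left `A`-module `L`, the induced module `T ⊗_A L` is isomorphic to the
pair `(L ⊕ (X ⊗_A L), τ)` with `τ(x ⊗ (l, u)) = (0, x ⊗ l)`. -/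
theorem stmt_3 (A X L : Type) [Ring A] [AddCommGroup X] [Module A X] [Module Aᵐᵒᵖ X]
    [SMulCommClass A Aᵐᵒᵖ X] [SMulCommClass Aᵐᵒᵖ A X] [AddCommGroup L] [Module A L] :
    (∀ (x : X) (p : L × Tens A X L), tau A X L (Tens.mk x p) = (0, Tens.mk x p.1)) ∧
    (∀ (x : X) (z : Tens A X (L × Tens A X L)),
      tau A X L (Tens.mk x (tau A X L z)) = 0) ∧
    ∃ e : Tens A (TrivSqZeroExt A X) L ≃ₗ[A] (L × Tens A X L),
      (∀ (t : TrivSqZeroExt A X) (l : L),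
        e (Tens.mk t l) = (t.fst • l, Tens.mk t.snd l)) ∧
      (∀ (x : X) (w : Tens A (TrivSqZeroExt A X) L),
        e ((TrivSqZeroExt.inr x : TrivSqZeroExt A X) • w) = tau A X L (Tens.mk x (e w))) := by
  refine ⟨tau_mk A X L, ?_, ?_⟩
  · intro x z
    rw [show tau A X L z = (0, (tau A X L z).2) from Prod.ext (tau_fst A X L z) rfl, tau_mk]
    simp
  · refine ⟨equiv3 A X L, ?_, ?_⟩
    · intro t l
      exact fwd3_mk A X L t l
    · intro x w
      have he : ∀ z, equiv3 A X L z = fwd3 A X L z := fun z => rfl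
      refine Tens.ind (motive := fun w => equiv3 A X L
        ((TrivSqZeroExt.inr x : TrivSqZeroExt A X) • w)
          = tau A X L (Tens.mk x (equiv3 A X L w))) ?_ ?_ ?_ w
      ·         rw [smul_zero, map_zero, Tens.mk_zero_right, map_zero]
      · intro t l
        rw [Tens.smul_mk, he, he, fwd3_mk, fwd3_mk, tau_mk]
        have h1 : ((TrivSqZeroExt.inr x : TrivSqZeroExt A X) • t)
            = TrivSqZeroExt.inr (op t.fst • x) := by
          show (TrivSqZeroExt.inr x : TrivSqZeroExt A X) * t = _
          refine TrivSqZeroExt.ext ?_ ?_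
          · rw [TrivSqZeroExt.fst_mul, TrivSqZeroExt.fst_inr, zero_mul, TrivSqZeroExt.fst_inr]
          · rw [TrivSqZeroExt.snd_mul, TrivSqZeroExt.snd_inr, TrivSqZeroExt.fst_inr,
              TrivSqZeroExt.snd_inr, zero_smul, zero_add]
        rw [h1]
        refine Prod.ext ?_ ?_
        · show (TrivSqZeroExt.inr (op t.fst • x) : TrivSqZeroExt A X).fst • l = (0 : L)
          rw [TrivSqZeroExt.fst_inr, zero_smul]
        · show (Tens.mk (TrivSqZeroExt.inr (op t.fst • x) : TrivSqZeroExt A X).snd l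
            : Tens A X L) = Tens.mk x (t.fst • l)
          rw [TrivSqZeroExt.snd_inr, Tens.mk_balance]
      · intro u v hu hv
        rw [smul_add, map_add, hu, hv, map_add, Tens.mk_add_right, map_add]
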